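/- Second (spatial) Bianchi identity for the Riemannian spatial connection (equation (3.14)): for all l, h, i, j, k ∈ {1,2,3}, the cyclic sum over (i,j,k) of bar R^l_{h ij|k} + 2 ω_{jk} bar R^l_{h 0i} vanishes, i.e. (bar R^l_{h ij|k} + 2 ω_{jk} bar R^l_{h 0i}) + (bar R^l_{h jk|i} + 2 ω_{ki} bar R^l_{h 0j}) + (bar R^l_{h ki|j} + 2 ω_{ij} bar R^l_{h 0k}) = 0 on U. -/

import Mathlib

noncomputable section

/-- Points of the spacetime coordinate domain `U ⊆ ℝ⁴`. -/
abbrev Pt : Type := Fin 4 → ℝ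

/-- Scalar fields on `ℝ⁴`. -/
abbrev SF : Type := Pt → ℝ

/-- Partial derivative `∂_a f` in the `x^a`-coordinate direction. -/
def pd (a : Fin 4) (f : SF) : SF := fun x => fderiv ℝ f x (Pi.single a 1)

/-- Threading derivative `δ_i f = ∂_i f − A_i ∂_0 f`. -/
def sd (A : Fin 3 → SF) (i : Fin 3) (f : SF) : SF := fun x =>
  pd i.succ f x - A i x * pd 0 f x

/-- `A_i = −Φ⁻² ξ_i`. -/
def Acoef (Φ : SF) (ξ : Fin 3 → SF) (i : Fin 3) : SF := fun x => -(Φ x ^ 2)⁻¹ * ξ i x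

/-- vorticity `ω_{ij} = ½ (δ_i A_j − δ_j A_i)`. -/
def vort (A : Fin 3 → SF) (i j : Fin 3) : SF := fun x =>
  (1 / 2) * (sd A i (A j) x - sd A j (A i) x)

/-- `a_i = −∂_0 A_i`. -/
def aco (A : Fin 3 → SF) (i : Fin 3) : SF := fun x => -pd 0 (A i) x

/-- `c_i = Φ⁻¹ δ_i Φ`. -/
def cco (Φ : SF) (A : Fin 3 → SF) (i : Fin 3) : SF := fun x => (Φ x)⁻¹ * sd A i Φ x

/-- `b_i = a_i + c_i`. -/
def bco (Φ : SF) (A : Fin 3 → SF) (i : Fin 3) : SF := fun x => aco A i x + cco Φ A i x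

/-- `Ψ = Φ⁻¹ ∂_0 Φ`. -/
def PsiF (Φ : SF) : SF := fun x => (Φ x)⁻¹ * pd 0 Φ x

/-- inverse entries `ḡ^{ij}` of the spatial metric. -/
def ginv (gb : Fin 3 → Fin 3 → SF) (i j : Fin 3) : SF := fun x =>
  (Matrix.of fun a b => gb a b x)⁻¹ i j

/-- expansion tensor `Θ_{ij} = ½ ∂_0 ḡ_{ij}`. -/
def Th (gb : Fin 3 → Fin 3 → SF) (i j : Fin 3) : SF := fun x => (1 / 2) * pd 0 (gb i j) x

/-- expansion function `Θ = ḡ^{ij} Θ_{ij}`. -/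
def ExpF (gb : Fin 3 → Fin 3 → SF) : SF := fun x => ∑ i, ∑ j, ginv gb i j x * Th gb i j x

/-- shear `σ_{ij} = Θ_{ij} − ⅓ Θ ḡ_{ij}`. -/
def shear (gb : Fin 3 → Fin 3 → SF) (i j : Fin 3) : SF := fun x =>
  Th gb i j x - (1 / 3) * ExpF gb x * gb i j x

/-- extrinsic curvature `K_{ij} = Θ_{ij} + Φ² ω_{ij}`. -/
def Kt (Φ : SF) (A : Fin 3 → SF) (gb : Fin 3 → Fin 3 → SF) (i j : Fin 3) : SF := fun x =>
  Th gb i j x + Φ x ^ 2 * vort A i j x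

/-- `K^h_i = ḡ^{hm} K_{mi}`. -/
def Km (Φ : SF) (A : Fin 3 → SF) (gb : Fin 3 → Fin 3 → SF) (h i : Fin 3) : SF := fun x =>
  ∑ m, ginv gb h m x * Kt Φ A gb m i x

/-- coefficients `Γ̄^k_{ij}` of the Riemannian spatial connection. -/
def Gamb (A : Fin 3 → SF) (gb : Fin 3 → Fin 3 → SF) (k i j : Fin 3) : SF := fun x =>
  (1 / 2) * ∑ h, ginv gb k h x *
    (sd A i (gb h j) x + sd A j (gb h i) x - sd A h (gb i j) x)

/-- curvature `R̄^h_{i jk}` of the Riemannian spatial connection. -/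
def barR (Φ : SF) (A : Fin 3 → SF) (gb : Fin 3 → Fin 3 → SF) (h i j k : Fin 3) : SF := fun x =>
  sd A k (Gamb A gb h i j) x - sd A j (Gamb A gb h i k) x
    + (∑ l, (Gamb A gb l i j x * Gamb A gb h l k x - Gamb A gb l i k x * Gamb A gb h l j x))
    - 2 * Km Φ A gb h i x * vort A j k x

/-- spatial covariant derivative `K^h_{i|k}`. -/
def Kcov (Φ : SF) (A : Fin 3 → SF) (gb : Fin 3 → Fin 3 → SF) (h i k : Fin 3) : SF := fun x =>
  sd A k (Km Φ A gb h i) x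
    + ∑ l, (Km Φ A gb l i x * Gamb A gb h l k x - Km Φ A gb h l x * Gamb A gb l i k x)

/-- mixed curvature `R̄^h_{i 0k} = K^h_{i|k} − ∂_0 Γ̄^h_{ik} + K^h_i a_k`. -/
def barR0 (Φ : SF) (A : Fin 3 → SF) (gb : Fin 3 → Fin 3 → SF) (h i k : Fin 3) : SF := fun x =>
  Kcov Φ A gb h i k x - pd 0 (Gamb A gb h i k) x + Km Φ A gb h i x * aco A k x

/-- lowered curvature `R̄_{il jk} = ḡ_{lh} R̄^h_{i jk}`. -/
def barRlow (Φ : SF) (A : Fin 3 → SF) (gb : Fin 3 → Fin 3 → SF) (i l j k : Fin 3) : SF := fun x =>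
  ∑ h, gb l h x * barR Φ A gb h i j k x

/-- lowered mixed curvature `R̄_{il 0k} = ḡ_{lh} R̄^h_{i 0k}`. -/
def barR0low (Φ : SF) (A : Fin 3 → SF) (gb : Fin 3 → Fin 3 → SF) (i l k : Fin 3) : SF := fun x =>
  ∑ h, gb l h x * barR0 Φ A gb h i k x

/-- spatial covariant derivative `R̄^l_{h ij|k}`. -/
def barRcov (Φ : SF) (A : Fin 3 → SF) (gb : Fin 3 → Fin 3 → SF) (l h i j k : Fin 3) : SF :=
  fun x =>
  sd A k (barR Φ A gb l h i j) x
    + ∑ m, (barR Φ A gb m h i j x * Gamb A gb l m k x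
        - barR Φ A gb l m i j x * Gamb A gb m h k x
        - barR Φ A gb l h m j x * Gamb A gb m i k x
        - barR Φ A gb l h i m x * Gamb A gb m j k x)

/-- temporal covariant derivative `R̄^l_{h ij|0}`. -/
def barRcov0 (Φ : SF) (A : Fin 3 → SF) (gb : Fin 3 → Fin 3 → SF) (l h i j : Fin 3) : SF :=
  fun x =>
  pd 0 (barR Φ A gb l h i j) x
    + ∑ m, (barR Φ A gb m h i j x * Km Φ A gb l m x
        - barR Φ A gb l m i j x * Km Φ A gb m h x
        - barR Φ A gb l h m j x * Km Φ A gb m i x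
        - barR Φ A gb l h i m x * Km Φ A gb m j x)

/-- spatial covariant derivative `R̄^l_{h 0i|j}`. -/
def barR0cov (Φ : SF) (A : Fin 3 → SF) (gb : Fin 3 → Fin 3 → SF) (l h i j : Fin 3) : SF :=
  fun x =>
  sd A j (barR0 Φ A gb l h i) x
    + ∑ m, (barR0 Φ A gb m h i x * Gamb A gb l m j x
        - barR0 Φ A gb l m i x * Gamb A gb m h j x
        - barR0 Φ A gb l h m x * Gamb A gb m i j x)

/-- spatial covariant derivative `K_{ij|k}`. -/
def Ktcov (Φ : SF) (A : Fin 3 → SF) (gb : Fin 3 → Fin 3 → SF) (i j k : Fin 3) : SF := fun x =>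
  sd A k (Kt Φ A gb i j) x
    - ∑ h, (Kt Φ A gb h j x * Gamb A gb h i k x + Kt Φ A gb i h x * Gamb A gb h j k x)

/-- temporal covariant derivative `K_{ik|0}`. -/
def Ktcov0 (Φ : SF) (A : Fin 3 → SF) (gb : Fin 3 → Fin 3 → SF) (i k : Fin 3) : SF := fun x =>
  pd 0 (Kt Φ A gb i k) x
    - ∑ h, (Kt Φ A gb h k x * Km Φ A gb h i x + Kt Φ A gb i h x * Km Φ A gb h k x)

/-- spatial covariant derivative `b_{i|k} = δ_k b_i − b_h Γ̄^h_{ik}`. -/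
def bcov (Φ : SF) (A : Fin 3 → SF) (gb : Fin 3 → Fin 3 → SF) (i k : Fin 3) : SF := fun x =>
  sd A k (bco Φ A i) x - ∑ h, bco Φ A h x * Gamb A gb h i k x

/-- `σ² = ḡ^{hi} ḡ^{kj} σ_{hk} σ_{ij}`. -/
def sigma2 (gb : Fin 3 → Fin 3 → SF) : SF := fun x =>
  ∑ h, ∑ i, ∑ k, ∑ j, ginv gb h i x * ginv gb k j x * shear gb h k x * shear gb i j x

/-- `ω² = ḡ^{hi} ḡ^{kj} ω_{hk} ω_{ij}`. -/
def omega2 (A : Fin 3 → SF) (gb : Fin 3 → Fin 3 → SF) : SF := fun x =>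
  ∑ h, ∑ i, ∑ k, ∑ j, ginv gb h i x * ginv gb k j x * vort A h k x * vort A i j x

/-- `b² = ḡ^{kh} b_k b_h`. -/
def bsq (Φ : SF) (A : Fin 3 → SF) (gb : Fin 3 → Fin 3 → SF) : SF := fun x =>
  ∑ k, ∑ h, ginv gb k h x * bco Φ A k x * bco Φ A h x

/-- `b^k = ḡ^{kh} b_h`. -/
def bup (Φ : SF) (A : Fin 3 → SF) (gb : Fin 3 → Fin 3 → SF) (k : Fin 3) : SF := fun x =>
  ∑ h, ginv gb k h x * bco Φ A h x

/-- divergence `b^k_{|k} = δ_k b^k + b^l Γ̄^k_{lk}`. -/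
def bdiv (Φ : SF) (A : Fin 3 → SF) (gb : Fin 3 → Fin 3 → SF) : SF := fun x =>
  ∑ k, (sd A k (bup Φ A gb k) x + ∑ l, bup Φ A gb l x * Gamb A gb k l k x)

/-- spatial Ricci tensor `R̄_{ij} = ½(R̄^k_{i jk} + R̄^k_{j ik})`. -/
def barRic (Φ : SF) (A : Fin 3 → SF) (gb : Fin 3 → Fin 3 → SF) (i j : Fin 3) : SF := fun x =>
  (1 / 2) * ((∑ k, barR Φ A gb k i j k x) + ∑ k, barR Φ A gb k j i k x)

/-- spatial scalar curvature `R̄ = ḡ^{ij} R̄_{ij}`. -/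
def barScal (Φ : SF) (A : Fin 3 → SF) (gb : Fin 3 → Fin 3 → SF) : SF := fun x =>
  ∑ i, ∑ j, ginv gb i j x * barRic Φ A gb i j x

/-! ### 4-dimensional (spacetime) objects -/

/-- inverse entries `g^{ab}` of a spacetime metric. -/
def mginv (g : Fin 4 → Fin 4 → SF) (a b : Fin 4) : SF := fun x =>
  (Matrix.of fun c d => g c d x)⁻¹ a b

/-- Christoffel symbols `Γ^c_{ab}` of a spacetime metric. -/
def Chr (g : Fin 4 → Fin 4 → SF) (c a b : Fin 4) : SF := fun x =>
  (1 / 2) * ∑ d, mginv g c d x * (pd a (g d b) x + pd b (g d a) x - pd d (g a b) x)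

/-- curvature `R^d_{c ab}` of a spacetime metric. -/
def Riem (g : Fin 4 → Fin 4 → SF) (d c a b : Fin 4) : SF := fun x =>
  pd a (Chr g d c b) x - pd b (Chr g d c a) x
    + ∑ e, (Chr g e c b x * Chr g d e a x - Chr g e c a x * Chr g d e b x)

/-- lowered curvature `R_{dc ab} = g_{de} R^e_{c ab}`. -/
def RiemLow (g : Fin 4 → Fin 4 → SF) (d c a b : Fin 4) : SF := fun x =>
  ∑ e, g d e x * Riem g e c a b x

/-- Ricci tensor `Ric_{cb} = R^a_{c ab}`. -/
def Ricc (g : Fin 4 → Fin 4 → SF) (c b : Fin 4) : SF := fun x => ∑ a, Riem g a c a b x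

/-- scalar curvature `𝐑 = g^{ab} Ric_{ab}`. -/
def Scal (g : Fin 4 → Fin 4 → SF) : SF := fun x => ∑ a, ∑ b, mginv g a b x * Ricc g a b x

/-- Einstein tensor `G_{ab} = Ric_{ab} − ½ 𝐑 g_{ab}`. -/
def Einst (g : Fin 4 → Fin 4 → SF) (a b : Fin 4) : SF := fun x =>
  Ricc g a b x - (1 / 2) * Scal g x * g a b x

/-- the spacetime metric determined by `Φ, ξ_i, ḡ_{ij}`:
`g_{00} = −Φ²`, `g_{0i} = g_{i0} = ξ_i`, `g_{ij} = ḡ_{ij} − Φ⁻² ξ_i ξ_j`. -/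
def gmet (Φ : SF) (ξ : Fin 3 → SF) (gb : Fin 3 → Fin 3 → SF) (a b : Fin 4) : SF := fun x =>
  Fin.cases
    (Fin.cases (-(Φ x ^ 2)) (fun j => ξ j x) b)
    (fun i => Fin.cases (ξ i x) (fun j => gb i j x - (Φ x ^ 2)⁻¹ * ξ i x * ξ j x) b) a

/-- the threading frame: `e_0^a = δ^a_0`, `e_i^a = δ^a_i − A_i δ^a_0`. -/
def frameV (Φ : SF) (ξ : Fin 3 → SF) (P : Fin 4) (x : Pt) (a : Fin 4) : ℝ :=
  Fin.cases ((if a = 0 then (1 : ℝ) else 0))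
    (fun i => (if a = i.succ then (1 : ℝ) else 0)
      - Acoef Φ ξ i x * (if a = 0 then (1 : ℝ) else 0)) P

/-- frame components `R_{PQ ST} = e_Q^d e_P^c e_T^a e_S^b R_{dc ab}` of the curvature. -/
def RiemF (Φ : SF) (ξ : Fin 3 → SF) (gb : Fin 3 → Fin 3 → SF) (P Q S T : Fin 4) : SF := fun x =>
  ∑ d, ∑ c, ∑ a, ∑ b,
    frameV Φ ξ Q x d * frameV Φ ξ P x c * frameV Φ ξ T x a * frameV Φ ξ S x b *
      RiemLow (gmet Φ ξ gb) d c a b x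


lemma contDiffAt_pd {f : SF} {x : Pt} (hf : ContDiffAt ℝ (⊤ : ℕ∞) f x) (a : Fin 4) :
    ContDiffAt ℝ (⊤ : ℕ∞) (pd a f) x := by
  unfold pd
  exact (hf.fderiv_right (by simp)).clm_apply contDiffAt_const

lemma diffAt_of_cd {f : SF} {x : Pt} (hf : ContDiffAt ℝ (⊤ : ℕ∞) f x) : DifferentiableAt ℝ f x :=
  (hf.of_le (by simp) : ContDiffAt ℝ 1 f x).differentiableAt one_ne_zero

lemma pd_add {f g : SF} {x : Pt} (a : Fin 4) (hf : DifferentiableAt ℝ f x)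
    (hg : DifferentiableAt ℝ g x) :
    pd a (fun y => f y + g y) x = pd a f x + pd a g x := by
  unfold pd; rw [fderiv_fun_add hf hg]; rfl

lemma pd_sub {f g : SF} {x : Pt} (a : Fin 4) (hf : DifferentiableAt ℝ f x)
    (hg : DifferentiableAt ℝ g x) :
    pd a (fun y => f y - g y) x = pd a f x - pd a g x := by
  unfold pd; rw [fderiv_fun_sub hf hg]; rfl

lemma pd_mul {f g : SF} {x : Pt} (a : Fin 4) (hf : DifferentiableAt ℝ f x)
    (hg : DifferentiableAt ℝ g x) :
    pd a (fun y => f y * g y) x = pd a f x * g x + f x * pd a g x := by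
  unfold pd; rw [fderiv_fun_mul hf hg]; simp; ring

lemma pd_const {x : Pt} (a : Fin 4) (c : ℝ) : pd a (fun _ => c) x = 0 := by
  unfold pd; simp

lemma pd_const_mul {f : SF} {x : Pt} (a : Fin 4) (c : ℝ) (hf : DifferentiableAt ℝ f x) :
    pd a (fun y => c * f y) x = c * pd a f x := by
  unfold pd; rw [fderiv_const_mul hf]; rfl


lemma pd_pd {f : SF} {x : Pt} (a b : Fin 4) (hf : ContDiffAt ℝ (⊤ : ℕ∞) f x) :
    pd a (pd b f) x = fderiv ℝ (fderiv ℝ f) x (Pi.single a 1) (Pi.single b 1) := by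
  have hd : DifferentiableAt ℝ (fderiv ℝ f) x :=
    (hf.fderiv_right (m := 1) (WithTop.coe_le_coe.mpr le_top)).differentiableAt one_ne_zero
  show fderiv ℝ (fun y => (fderiv ℝ f y) (Pi.single b 1)) x (Pi.single a 1) = _
  rw [fderiv_clm_apply hd (differentiableAt_const _)]
  simp

lemma pd_comm {f : SF} {x : Pt} (a b : Fin 4) (hf : ContDiffAt ℝ (⊤ : ℕ∞) f x) :
    pd a (pd b f) x = pd b (pd a f) x := by
  rw [pd_pd a b hf, pd_pd b a hf]
  exact hf.isSymmSndFDerivAt (by rw [minSmoothness_of_isRCLikeNormedField]; exact WithTop.coe_le_coe.mpr le_top) _ _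

section SD
variable {A : Fin 3 → SF} {x : Pt} {f g : SF}

lemma contDiffAt_sd (hAi : ∀ r, ContDiffAt ℝ (⊤ : ℕ∞) (A r) x) (p : Fin 3)
    (hf : ContDiffAt ℝ (⊤ : ℕ∞) f x) : ContDiffAt ℝ (⊤ : ℕ∞) (sd A p f) x := by
  unfold sd
  exact (contDiffAt_pd hf p.succ).sub ((hAi p).mul (contDiffAt_pd hf 0))

lemma contDiffAt_vort (hAi : ∀ r, ContDiffAt ℝ (⊤ : ℕ∞) (A r) x) (p q : Fin 3) :
    ContDiffAt ℝ (⊤ : ℕ∞) (vort A p q) x := by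
  unfold vort
  exact contDiffAt_const.mul ((contDiffAt_sd hAi p (hAi q)).sub (contDiffAt_sd hAi q (hAi p)))

lemma sd_add (p : Fin 3) (hf : DifferentiableAt ℝ f x) (hg : DifferentiableAt ℝ g x) :
    sd A p (fun y => f y + g y) x = sd A p f x + sd A p g x := by
  unfold sd; rw [pd_add _ hf hg, pd_add _ hf hg]; ring

lemma sd_sub (p : Fin 3) (hf : DifferentiableAt ℝ f x) (hg : DifferentiableAt ℝ g x) :
    sd A p (fun y => f y - g y) x = sd A p f x - sd A p g x := by
  unfold sd; rw [pd_sub _ hf hg, pd_sub _ hf hg]; ring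

lemma sd_mul (p : Fin 3) (hf : DifferentiableAt ℝ f x) (hg : DifferentiableAt ℝ g x) :
    sd A p (fun y => f y * g y) x = sd A p f x * g x + f x * sd A p g x := by
  unfold sd; rw [pd_mul _ hf hg, pd_mul _ hf hg]; ring

lemma sd_const (p : Fin 3) (c : ℝ) : sd A p (fun _ => c) x = 0 := by
  unfold sd; rw [pd_const, pd_const]; ring

lemma sd_const_mul (p : Fin 3) (c : ℝ) (hf : DifferentiableAt ℝ f x) :
    sd A p (fun y => c * f y) x = c * sd A p f x := by
  unfold sd; rw [pd_const_mul _ c hf, pd_const_mul _ c hf]; ring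

lemma sd_comm (hAi : ∀ r, ContDiffAt ℝ (⊤ : ℕ∞) (A r) x) (p q : Fin 3) (hf : ContDiffAt ℝ (⊤ : ℕ∞) f x) :
    sd A p (sd A q f) x = sd A q (sd A p f) x - 2 * vort A p q x * pd 0 f x := by
  have hdf : ∀ b : Fin 4, DifferentiableAt ℝ (pd b f) x :=
    fun b => diffAt_of_cd (contDiffAt_pd hf b)
  have hdA : ∀ r, DifferentiableAt ℝ (A r) x := fun r => diffAt_of_cd (hAi r)
  have e : ∀ p q : Fin 3, sd A p (sd A q f) x
      = pd p.succ (pd q.succ f) x - A p x * pd 0 (pd q.succ f) x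
        - (sd A p (A q) x * pd 0 f x + A q x * (pd p.succ (pd 0 f) x - A p x * pd 0 (pd 0 f) x)) := by
    intro p q
    show sd A p (fun y => pd q.succ f y - A q y * pd 0 f y) x = _
    rw [sd_sub (g := fun y => A q y * pd 0 f y) p (hdf q.succ) ((hdA q).mul (hdf 0)), sd_mul p (hdA q) (hdf 0)]
    rfl
  rw [e p q, e q p]
  have c1 : pd p.succ (pd q.succ f) x = pd q.succ (pd p.succ f) x := pd_comm _ _ hf
  have c2 : pd 0 (pd q.succ f) x = pd q.succ (pd 0 f) x := pd_comm _ _ hf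
  have c3 : pd 0 (pd p.succ f) x = pd p.succ (pd 0 f) x := pd_comm _ _ hf
  unfold vort
  ring_nf
  rw [c1, c2, c3]
  ring

end SD

section TENS
variable (A : Fin 3 → SF) (G : Fin 3 → Fin 3 → Fin 3 → SF) (Kf : Fin 3 → Fin 3 → SF)

def bR (a b c d : Fin 3) : SF := fun y =>
  sd A d (G a b c) y - sd A c (G a b d) y
  + (G 0 b c y * G a 0 d y - G 0 b d y * G a 0 c y)
  + (G 1 b c y * G a 1 d y - G 1 b d y * G a 1 c y)
  + (G 2 b c y * G a 2 d y - G 2 b d y * G a 2 c y)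
  - 2 * Kf a b y * vort A c d y

def bR0 (a b c : Fin 3) : SF := fun y =>
  sd A c (Kf a b) y
  + (Kf 0 b y * G a 0 c y - Kf a 0 y * G 0 b c y)
  + (Kf 1 b y * G a 1 c y - Kf a 1 y * G 1 b c y)
  + (Kf 2 b y * G a 2 c y - Kf a 2 y * G 2 b c y)
  - pd 0 (G a b c) y - Kf a b y * pd 0 (A c) y

variable {A G Kf} {x : Pt}

lemma sd_bR (hAi : ∀ r, ContDiffAt ℝ (⊤ : ℕ∞) (A r) x)
    (hG : ∀ a b c, ContDiffAt ℝ (⊤ : ℕ∞) (G a b c) x)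
    (hK : ∀ a b, ContDiffAt ℝ (⊤ : ℕ∞) (Kf a b) x) (p a b c d : Fin 3) :
    sd A p (bR A G Kf a b c d) x =
      sd A p (sd A d (G a b c)) x - sd A p (sd A c (G a b d)) x
      + (sd A p (G 0 b c) x * G a 0 d x + G 0 b c x * sd A p (G a 0 d) x
         - (sd A p (G 0 b d) x * G a 0 c x + G 0 b d x * sd A p (G a 0 c) x))
      + (sd A p (G 1 b c) x * G a 1 d x + G 1 b c x * sd A p (G a 1 d) x
         - (sd A p (G 1 b d) x * G a 1 c x + G 1 b d x * sd A p (G a 1 c) x))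
      + (sd A p (G 2 b c) x * G a 2 d x + G 2 b c x * sd A p (G a 2 d) x
         - (sd A p (G 2 b d) x * G a 2 c x + G 2 b d x * sd A p (G a 2 c) x))
      - 2 * (sd A p (Kf a b) x * vort A c d x + Kf a b x * sd A p (vort A c d) x) := by
  have h1 : ∀ q e f g, DifferentiableAt ℝ (sd A q (G e f g)) x :=
    fun q e f g => diffAt_of_cd (contDiffAt_sd hAi q (hG e f g))
  have h2 : ∀ e f g, DifferentiableAt ℝ (G e f g) x := fun e f g => diffAt_of_cd (hG e f g)
  have h3 : ∀ e f, DifferentiableAt ℝ (Kf e f) x := fun e f => diffAt_of_cd (hK e f)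
  have h4 : ∀ q r, DifferentiableAt ℝ (vort A q r) x :=
    fun q r => diffAt_of_cd (contDiffAt_vort hAi q r)
  unfold bR
  simp (disch := solve_by_elim (maxDepth := 30) [DifferentiableAt.sub, DifferentiableAt.add,
    DifferentiableAt.mul, differentiableAt_const]) only [sd_sub, sd_add, sd_mul, sd_const_mul, sd_const]
  ring
lemma sd_vort (hAi : ∀ r, ContDiffAt ℝ (⊤ : ℕ∞) (A r) x) (p c d : Fin 3) :
    sd A p (vort A c d) x
      = 1 / 2 * (sd A p (sd A c (A d)) x - sd A p (sd A d (A c)) x) := by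
  have h1 : ∀ q r, DifferentiableAt ℝ (sd A q (A r)) x :=
    fun q r => diffAt_of_cd (contDiffAt_sd hAi q (hAi r))
  unfold vort
  simp (disch := solve_by_elim (maxDepth := 30) [DifferentiableAt.sub, DifferentiableAt.add,
    DifferentiableAt.mul, differentiableAt_const]) only [sd_sub, sd_add, sd_mul, sd_const_mul, sd_const]

lemma keyB (hAi : ∀ r, ContDiffAt ℝ (⊤ : ℕ∞) (A r) x)
    (hG : ∀ a b c, ContDiffAt ℝ (⊤ : ℕ∞) (G a b c) x)
    (hK : ∀ a b, ContDiffAt ℝ (⊤ : ℕ∞) (Kf a b) x) (l h i j k : Fin 3) :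
    (sd A k (bR A G Kf l h i j) x
      + (bR A G Kf 0 h i j x * G l 0 k x - bR A G Kf l 0 i j x * G 0 h k x)
      + (bR A G Kf 1 h i j x * G l 1 k x - bR A G Kf l 1 i j x * G 1 h k x)
      + (bR A G Kf 2 h i j x * G l 2 k x - bR A G Kf l 2 i j x * G 2 h k x)
      + 2 * vort A j k x * bR0 A G Kf l h i x)
    + (sd A i (bR A G Kf l h j k) x
      + (bR A G Kf 0 h j k x * G l 0 i x - bR A G Kf l 0 j k x * G 0 h i x)
      + (bR A G Kf 1 h j k x * G l 1 i x - bR A G Kf l 1 j k x * G 1 h i x)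
      + (bR A G Kf 2 h j k x * G l 2 i x - bR A G Kf l 2 j k x * G 2 h i x)
      + 2 * vort A k i x * bR0 A G Kf l h j x)
    + (sd A j (bR A G Kf l h k i) x
      + (bR A G Kf 0 h k i x * G l 0 j x - bR A G Kf l 0 k i x * G 0 h j x)
      + (bR A G Kf 1 h k i x * G l 1 j x - bR A G Kf l 1 k i x * G 1 h j x)
      + (bR A G Kf 2 h k i x * G l 2 j x - bR A G Kf l 2 k i x * G 2 h j x)
      + 2 * vort A i j x * bR0 A G Kf l h k x) = 0 := by
  rw [sd_bR hAi hG hK k l h i j, sd_bR hAi hG hK i l h j k, sd_bR hAi hG hK j l h k i,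
    sd_vort hAi k i j, sd_vort hAi i j k, sd_vort hAi j k i]
  rw [sd_comm hAi k j (hG l h i), sd_comm hAi i k (hG l h j), sd_comm hAi j i (hG l h k),
    sd_comm hAi k i (hAi j), sd_comm hAi k j (hAi i), sd_comm hAi j i (hAi k)]
  simp only [bR, bR0, vort]
  ring

lemma keyA (hGsym : ∀ a b c, G a b c x = G a c b x) (l h i j k : Fin 3) :
    ((bR A G Kf l h 0 j x * G 0 i k x + bR A G Kf l h i 0 x * G 0 j k x)
      + (bR A G Kf l h 1 j x * G 1 i k x + bR A G Kf l h i 1 x * G 1 j k x)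
      + (bR A G Kf l h 2 j x * G 2 i k x + bR A G Kf l h i 2 x * G 2 j k x))
    + ((bR A G Kf l h 0 k x * G 0 j i x + bR A G Kf l h j 0 x * G 0 k i x)
      + (bR A G Kf l h 1 k x * G 1 j i x + bR A G Kf l h j 1 x * G 1 k i x)
      + (bR A G Kf l h 2 k x * G 2 j i x + bR A G Kf l h j 2 x * G 2 k i x))
    + ((bR A G Kf l h 0 i x * G 0 k j x + bR A G Kf l h k 0 x * G 0 i j x)
      + (bR A G Kf l h 1 i x * G 1 k j x + bR A G Kf l h k 1 x * G 1 i j x)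
      + (bR A G Kf l h 2 i x * G 2 k j x + bR A G Kf l h k 2 x * G 2 i j x)) = 0 := by
  rw [hGsym 0 j i, hGsym 1 j i, hGsym 2 j i, hGsym 0 k j, hGsym 1 k j, hGsym 2 k j, hGsym 0 i k, hGsym 1 i k, hGsym 2 i k]
  simp only [bR, vort]
  ring

lemma key (hAi : ∀ r, ContDiffAt ℝ (⊤ : ℕ∞) (A r) x)
    (hG : ∀ a b c, ContDiffAt ℝ (⊤ : ℕ∞) (G a b c) x)
    (hK : ∀ a b, ContDiffAt ℝ (⊤ : ℕ∞) (Kf a b) x)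
    (hGsym : ∀ a b c, G a b c x = G a c b x) (l h i j k : Fin 3) :
    (sd A k (bR A G Kf l h i j) x
      + (bR A G Kf 0 h i j x * G l 0 k x - bR A G Kf l 0 i j x * G 0 h k x
         - bR A G Kf l h 0 j x * G 0 i k x - bR A G Kf l h i 0 x * G 0 j k x)
      + (bR A G Kf 1 h i j x * G l 1 k x - bR A G Kf l 1 i j x * G 1 h k x
         - bR A G Kf l h 1 j x * G 1 i k x - bR A G Kf l h i 1 x * G 1 j k x)
      + (bR A G Kf 2 h i j x * G l 2 k x - bR A G Kf l 2 i j x * G 2 h k x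
         - bR A G Kf l h 2 j x * G 2 i k x - bR A G Kf l h i 2 x * G 2 j k x)
      + 2 * vort A j k x * bR0 A G Kf l h i x)
    + (sd A i (bR A G Kf l h j k) x
      + (bR A G Kf 0 h j k x * G l 0 i x - bR A G Kf l 0 j k x * G 0 h i x
         - bR A G Kf l h 0 k x * G 0 j i x - bR A G Kf l h j 0 x * G 0 k i x)
      + (bR A G Kf 1 h j k x * G l 1 i x - bR A G Kf l 1 j k x * G 1 h i x
         - bR A G Kf l h 1 k x * G 1 j i x - bR A G Kf l h j 1 x * G 1 k i x)
      + (bR A G Kf 2 h j k x * G l 2 i x - bR A G Kf l 2 j k x * G 2 h i x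
         - bR A G Kf l h 2 k x * G 2 j i x - bR A G Kf l h j 2 x * G 2 k i x)
      + 2 * vort A k i x * bR0 A G Kf l h j x)
    + (sd A j (bR A G Kf l h k i) x
      + (bR A G Kf 0 h k i x * G l 0 j x - bR A G Kf l 0 k i x * G 0 h j x
         - bR A G Kf l h 0 i x * G 0 k j x - bR A G Kf l h k 0 x * G 0 i j x)
      + (bR A G Kf 1 h k i x * G l 1 j x - bR A G Kf l 1 k i x * G 1 h j x
         - bR A G Kf l h 1 i x * G 1 k j x - bR A G Kf l h k 1 x * G 1 i j x)
      + (bR A G Kf 2 h k i x * G l 2 j x - bR A G Kf l 2 k i x * G 2 h j x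
         - bR A G Kf l h 2 i x * G 2 k j x - bR A G Kf l h k 2 x * G 2 i j x)
      + 2 * vort A i j x * bR0 A G Kf l h k x) = 0 := by
  linear_combination keyB hAi hG hK l h i j k - keyA hGsym l h i j k

end TENS

section SMOOTH
variable {gb : Fin 3 → Fin 3 → SF} {x : Pt}

lemma contDiffAt_det3 (hgb : ∀ i j, ContDiffAt ℝ (⊤ : ℕ∞) (gb i j) x) :
    ContDiffAt ℝ (⊤ : ℕ∞) (fun y => (Matrix.of fun a b => gb a b y).det) x := by
  have e : (fun y => (Matrix.of fun a b => gb a b y).det)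
      = fun y => gb 0 0 y * gb 1 1 y * gb 2 2 y - gb 0 0 y * gb 1 2 y * gb 2 1 y
        - gb 0 1 y * gb 1 0 y * gb 2 2 y + gb 0 1 y * gb 1 2 y * gb 2 0 y
        + gb 0 2 y * gb 1 0 y * gb 2 1 y - gb 0 2 y * gb 1 1 y * gb 2 0 y := by
    funext y; rw [Matrix.det_fin_three]; simp [Matrix.of_apply]
  rw [e]
  exact (((((((hgb 0 0).mul (hgb 1 1)).mul (hgb 2 2)).sub
    (((hgb 0 0).mul (hgb 1 2)).mul (hgb 2 1))).sub
    (((hgb 0 1).mul (hgb 1 0)).mul (hgb 2 2))).add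
    (((hgb 0 1).mul (hgb 1 2)).mul (hgb 2 0))).add
    (((hgb 0 2).mul (hgb 1 0)).mul (hgb 2 1))).sub
    (((hgb 0 2).mul (hgb 1 1)).mul (hgb 2 0))

lemma contDiffAt_adj3 (hgb : ∀ i j, ContDiffAt ℝ (⊤ : ℕ∞) (gb i j) x) (a b : Fin 3) :
    ContDiffAt ℝ (⊤ : ℕ∞) (fun y => (Matrix.of fun p q => gb p q y).adjugate a b) x := by
  have e : (fun y => (Matrix.of fun p q => gb p q y).adjugate a b)
      = fun y => (-1 : ℝ) ^ ((b : ℕ) + (a : ℕ)) *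
          (gb (b.succAbove 0) (a.succAbove 0) y * gb (b.succAbove 1) (a.succAbove 1) y
           - gb (b.succAbove 0) (a.succAbove 1) y * gb (b.succAbove 1) (a.succAbove 0) y) := by
    funext y
    rw [Matrix.adjugate_fin_succ_eq_det_submatrix, Matrix.det_fin_two]
    simp [Matrix.submatrix_apply, Matrix.of_apply]
  rw [e]
  exact contDiffAt_const.mul
    (((hgb (b.succAbove 0) (a.succAbove 0)).mul (hgb (b.succAbove 1) (a.succAbove 1))).sub
      ((hgb (b.succAbove 0) (a.succAbove 1)).mul (hgb (b.succAbove 1) (a.succAbove 0))))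

lemma contDiffAt_ginv (hgb : ∀ i j, ContDiffAt ℝ (⊤ : ℕ∞) (gb i j) x)
    (hdet : (Matrix.of fun a b => gb a b x).det ≠ 0) (a b : Fin 3) :
    ContDiffAt ℝ (⊤ : ℕ∞) (ginv gb a b) x := by
  have e : ginv gb a b = fun y => ((Matrix.of fun p q => gb p q y).det)⁻¹ *
      (Matrix.of fun p q => gb p q y).adjugate a b := by
    funext y; unfold ginv
    rw [Matrix.inv_def, Matrix.smul_apply, Ring.inverse_eq_inv, smul_eq_mul]
  rw [e]
  exact ((contDiffAt_det3 hgb).inv hdet).mul (contDiffAt_adj3 hgb a b)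

end SMOOTH


/-- equation (3.14): second (spatial) Bianchi identity for the
Riemannian spatial connection: the cyclic sum over `(i,j,k)` of
`R̄^l_{h ij|k} + 2 ω_{jk} R̄^l_{h 0i}` vanishes. -/
theorem stmt_7 (U : Set Pt) (hU : IsOpen U)
    (Φ : SF) (ξ : Fin 3 → SF) (gb : Fin 3 → Fin 3 → SF)
    (hΦ : ContDiffOn ℝ (⊤ : ℕ∞) Φ U) (hΦ0 : ∀ x ∈ U, Φ x ≠ 0)
    (hξ : ∀ i, ContDiffOn ℝ (⊤ : ℕ∞) (ξ i) U)
    (hgb : ∀ i j, ContDiffOn ℝ (⊤ : ℕ∞) (gb i j) U)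
    (hpos : ∀ x ∈ U, (Matrix.of fun i j => gb i j x).PosDef) :
    ∀ x ∈ U, ∀ l h i j k : Fin 3,
      (barRcov Φ (Acoef Φ ξ) gb l h i j k x
          + 2 * vort (Acoef Φ ξ) j k x * barR0 Φ (Acoef Φ ξ) gb l h i x)
        + (barRcov Φ (Acoef Φ ξ) gb l h j k i x
          + 2 * vort (Acoef Φ ξ) k i x * barR0 Φ (Acoef Φ ξ) gb l h j x)
        + (barRcov Φ (Acoef Φ ξ) gb l h k i j x
          + 2 * vort (Acoef Φ ξ) i j x * barR0 Φ (Acoef Φ ξ) gb l h k x) = 0 := by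
  intro x hx l h i j k
  have hmem : U ∈ nhds x := hU.mem_nhds hx
  set A := Acoef Φ ξ with hAdef
  have hΦx : ContDiffAt ℝ (⊤ : ℕ∞) Φ x := hΦ.contDiffAt hmem
  have hgbx : ∀ a b, ContDiffAt ℝ (⊤ : ℕ∞) (gb a b) x := fun a b => (hgb a b).contDiffAt hmem
  have hAi : ∀ r, ContDiffAt ℝ (⊤ : ℕ∞) (A r) x := by
    intro r
    rw [hAdef]
    unfold Acoef
    exact (((hΦx.pow 2).inv (pow_ne_zero 2 (hΦ0 x hx))).neg).mul ((hξ r).contDiffAt hmem)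
  have hdet : (Matrix.of fun a b => gb a b x).det ≠ 0 := ne_of_gt (hpos x hx).det_pos
  have hgi : ∀ a b, ContDiffAt ℝ (⊤ : ℕ∞) (ginv gb a b) x := fun a b => contDiffAt_ginv hgbx hdet a b
  have hG : ∀ a b c, ContDiffAt ℝ (⊤ : ℕ∞) (Gamb A gb a b c) x := by
    intro a b c
    unfold Gamb
    exact contDiffAt_const.mul (ContDiffAt.sum fun m _ => (hgi a m).mul
      (((contDiffAt_sd hAi b (hgbx m c)).add (contDiffAt_sd hAi c (hgbx m b))).sub
        (contDiffAt_sd hAi m (hgbx b c))))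
  have hK : ∀ a b, ContDiffAt ℝ (⊤ : ℕ∞) (Km Φ A gb a b) x := by
    intro a b
    unfold Km Kt Th
    exact ContDiffAt.sum fun m _ => (hgi a m).mul
      ((contDiffAt_const.mul (contDiffAt_pd (hgbx m b) 0)).add
        ((hΦx.pow 2).mul (contDiffAt_vort hAi m b)))
  have hgbsym : ∀ y ∈ U, ∀ a b, gb a b y = gb b a y := by
    intro y hy a b
    have := (hpos y hy).1.apply a b
    simpa using this.symm
  have hsd_gb_sym : ∀ m a b, sd A m (gb a b) x = sd A m (gb b a) x := by
    intro m a b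
    have hev : gb a b =ᶠ[nhds x] gb b a :=
      Filter.eventuallyEq_of_mem hmem (fun y hy => hgbsym y hy a b)
    unfold sd pd
    rw [hev.fderiv_eq]
  have hGsym : ∀ a b c, Gamb A gb a b c x = Gamb A gb a c b x := by
    intro a b c
    unfold Gamb
    congr 1
    refine Finset.sum_congr rfl fun m _ => ?_
    rw [hsd_gb_sym m b c]
    ring
  have hbR : ∀ a b c d, barR Φ A gb a b c d = bR A (Gamb A gb) (Km Φ A gb) a b c d := by
    intro a b c d; funext y
    simp only [barR, bR, Fin.sum_univ_three]; ring
  have hbR0 : ∀ a b c, barR0 Φ A gb a b c = bR0 A (Gamb A gb) (Km Φ A gb) a b c := by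
    intro a b c; funext y
    simp only [barR0, bR0, Kcov, aco, Fin.sum_univ_three]; ring
  have hmain := key hAi hG hK hGsym l h i j k
  simp only [barRcov, Fin.sum_univ_three, hbR, hbR0]
  linear_combination hmain
end
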